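/- For each r ≥ 0 and each block B ∈ P_r of the binary hierarchy on ℕ₀ let H(B) be a random real symmetric B × B matrix, all independent, with entries H(B)_{xy} for x ≤ y independent centered Gaussians of variance |B|^{−(1+c)}·(1+δ_{xy})/|B|. If c > 1, then for every x ∈ ℕ₀, almost surely there exists C < ∞ such that ‖H(B_r(x))‖₁ ≤ C·2^{(1−c)r/4} for all r ≥ 0; in particular, almost surely Σ_{r≥0} ‖H(B_r(x))‖₁ < ∞. -/

import Mathlib

open MeasureTheory ProbabilityTheory Classical Matrix

/-- The eigenvalues (with multiplicity) of a real symmetric matrix. -/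
noncomputable def symEig {N : ℕ} (A : Matrix (Fin N) (Fin N) ℝ) : Fin N → ℝ :=
  if hA : A.IsHermitian then hA.eigenvalues else 0

/-- The trace norm of a real square matrix: the trace of `√(AᵀA)`, i.e. the sum of the
singular values of `A`. -/
noncomputable def traceNorm {N : ℕ} (A : Matrix (Fin N) (Fin N) ℝ) : ℝ :=
  ∑ i, Real.sqrt (symEig (Aᵀ * A) i)

/-!
Cauchy–Schwarz on the singular values gives `‖A‖₁² ≤ N ∑ᵢⱼ Aᵢⱼ²` for an `N × N` matrix, and the
Gaussian variances give `E[2^r ∑ᵢⱼ H(B_r(x))ᵢⱼ²] ≤ 2 ρ^{4r}` with `ρ = 2^{(1-c)/4} < 1`.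
Hence `∑_r 2^r ∑ᵢⱼ H(B_r(x))ᵢⱼ² / ρ^{2r}` has finite expectation, so it is almost surely finite,
and bounding each term by the sum gives `‖H(B_r(x))‖₁ ≤ √C ρ^r`, a geometric bound.
-/

open scoped ENNReal NNReal

lemma sum_symEig_transpose_mul_self {N : ℕ} (A : Matrix (Fin N) (Fin N) ℝ) :
    ∑ i, symEig (Aᵀ * A) i = ∑ p, ∑ q, A p q ^ 2 := by
  have hH : (Aᵀ * A).IsHermitian := by
    simpa using isHermitian_conjTranspose_mul_self A
  rw [symEig, dif_pos hH]
  have := hH.trace_eq_sum_eigenvalues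
  simp only [RCLike.ofReal_real_eq_id, id] at this
  rw [← this, Finset.sum_comm]
  simp [Matrix.trace, Matrix.mul_apply, sq]

lemma symEig_transpose_mul_self_nonneg {N : ℕ} (A : Matrix (Fin N) (Fin N) ℝ) (i : Fin N) :
    0 ≤ symEig (Aᵀ * A) i := by
  have hA : (Aᵀ * A).PosSemidef := by simpa using posSemidef_conjTranspose_mul_self A
  rw [symEig, dif_pos hA.isHermitian]
  exact hA.eigenvalues_nonneg i

lemma traceNorm_nonneg {N : ℕ} (A : Matrix (Fin N) (Fin N) ℝ) : 0 ≤ traceNorm A :=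
  Finset.sum_nonneg fun _ _ => Real.sqrt_nonneg _

lemma traceNorm_sq_le {N : ℕ} (A : Matrix (Fin N) (Fin N) ℝ) :
    traceNorm A ^ 2 ≤ N * ∑ p, ∑ q, A p q ^ 2 := by
  have := Finset.sum_mul_sq_le_sq_mul_sq Finset.univ (fun _ => (1 : ℝ))
    (fun i => √(symEig (Aᵀ * A) i))
  simpa [traceNorm, Real.sq_sqrt (symEig_transpose_mul_self_nonneg A _),
    sum_symEig_transpose_mul_self] using this

lemma lintegral_ofReal_sq_gaussianReal (v : ℝ≥0) :
    ∫⁻ x, ENNReal.ofReal (x ^ 2) ∂gaussianReal 0 v = v := by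
  have h := (memLp_id_gaussianReal (μ := 0) (v := v) 2).ofReal_variance_eq
  rw [variance_id_gaussianReal, evariance_eq_lintegral_ofReal] at h
  simpa [integral_id_gaussianReal] using h.symm

lemma lintegral_ofReal_sum_sq_of_map_eq_gaussianReal {Ω ι : Type*} [MeasurableSpace Ω]
    {μ : Measure Ω} (s : Finset ι) {X : ι → Ω → ℝ} (hX : ∀ i, AEMeasurable (X i) μ)
    {v : ι → ℝ≥0} (hlaw : ∀ i, μ.map (X i) = gaussianReal 0 (v i)) :
    ∫⁻ ω, ENNReal.ofReal (∑ i ∈ s, X i ω ^ 2) ∂μ = ∑ i ∈ s, (v i : ℝ≥0∞) := by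
  simp_rw [ENNReal.ofReal_sum_of_nonneg fun _ _ => sq_nonneg _]
  rw [lintegral_finsetSum' _ fun i _ => ((hX i).pow_const 2).ennreal_ofReal]
  refine Finset.sum_congr rfl fun i _ => ?_
  rw [← lintegral_ofReal_sq_gaussianReal, ← hlaw, lintegral_map' (by fun_prop) (hX i)]

lemma ae_exists_forall_le_mul_of_lintegral_le {Ω ι : Type*} [MeasurableSpace Ω] [Countable ι]
    {μ : Measure Ω} {f : ι → Ω → ℝ} (hf : ∀ i, AEMeasurable (f i) μ) {a w : ι → ℝ}
    (hw : ∀ i, 0 < w i) (hfa : ∀ i, ∫⁻ ω, ENNReal.ofReal (f i ω) ∂μ ≤ ENNReal.ofReal (a i))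
    (ha : Summable fun i => a i / w i) :
    ∀ᵐ ω ∂μ, ∃ C, ∀ i, f i ω ≤ C * w i := by
  set g : ι → Ω → ℝ≥0∞ := fun i ω => ENNReal.ofReal (f i ω / w i)
  have hg : ∀ i, AEMeasurable (g i) μ := fun i => ((hf i).div_const _).ennreal_ofReal
  have hg_int : ∀ i, ∫⁻ ω, g i ω ∂μ ≤ ENNReal.ofReal (a i / w i) := fun i => by
    simp_rw [g, div_eq_mul_inv, mul_comm _ (w i)⁻¹,
      ENNReal.ofReal_mul (inv_nonneg.2 (hw i).le)]
    rw [lintegral_const_mul' _ _ ENNReal.ofReal_ne_top]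
    gcongr
    exact hfa i
  have hg_sum : ∫⁻ ω, ∑' i, g i ω ∂μ ≠ ⊤ := by
    rw [lintegral_tsum hg]
    exact ne_top_of_le_ne_top (ENNReal.tsum_coe_ne_top_iff_summable.2 ha.toNNReal)
      (ENNReal.tsum_le_tsum hg_int)
  filter_upwards [ae_lt_top' (AEMeasurable.tsum hg) hg_sum] with ω hω
  refine ⟨(∑' i, g i ω).toReal, fun i => ?_⟩
  rw [← div_le_iff₀ (hw i), ← ENNReal.ofReal_le_iff_le_toReal hω.ne]
  exact ENNReal.le_tsum (f := fun i => g i ω) i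

lemma mul_sum_sum_ultrametricVariance_le (c : ℝ) (N : ℕ) :
    (N : ℝ) * ∑ p : Fin N, ∑ q : Fin N, ((N : ℝ) ^ (-(1 + c)) * (1 + if p = q then 1 else 0) / N)
      ≤ 2 * (N : ℝ) ^ (1 - c) := by
  rcases N.eq_zero_or_pos with rfl | hN
  · simpa using Real.rpow_nonneg le_rfl (1 - c)
  have hN' : (0 : ℝ) < N := Nat.cast_pos.2 hN
  calc _ ≤ N * ∑ _p : Fin N, ∑ _q : Fin N, ((N : ℝ) ^ (-(1 + c)) * 2 / N) := by
        gcongr with p _ q _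
        split_ifs <;> norm_num
    _ = 2 * ((N : ℝ) ^ (1 : ℝ) * (N : ℝ) ^ (1 : ℝ) * (N : ℝ) ^ (-(1 + c))) := by
        simp only [Finset.sum_const, Finset.card_univ, Fintype.card_fin, nsmul_eq_mul,
          Real.rpow_one]
        field_simp
    _ = 2 * (N : ℝ) ^ (1 - c) := by
        rw [← Real.rpow_add hN', ← Real.rpow_add hN']
        ring_nf

lemma lintegral_ofReal_mul_sum_sq_le_of_ultrametricVariance {Ω : Type*} [MeasurableSpace Ω]
    {μ : Measure Ω} {c : ℝ} {N : ℕ} {A : Ω → Matrix (Fin N) (Fin N) ℝ}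
    (hA : ∀ p q, AEMeasurable (fun ω => A ω p q) μ)
    (hlaw : ∀ p q, μ.map (fun ω => A ω p q) = gaussianReal 0
      (Real.toNNReal ((N : ℝ) ^ (-(1 + c)) * (1 + if p = q then 1 else 0) / N))) :
    ∫⁻ ω, ENNReal.ofReal (N * ∑ p, ∑ q, A ω p q ^ 2) ∂μ ≤
      ENNReal.ofReal (2 * (N : ℝ) ^ (1 - c)) := by
  have hvar_nonneg : ∀ p q : Fin N,
      0 ≤ (N : ℝ) ^ (-(1 + c)) * (1 + if p = q then 1 else 0) / N := fun p q => by
    split_ifs <;> positivity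
  have hE := lintegral_ofReal_sum_sq_of_map_eq_gaussianReal (μ := μ) Finset.univ
    (fun i : Fin N × Fin N => hA i.1 i.2) (fun i => hlaw i.1 i.2)
  simp only [← Finset.univ_product_univ, Finset.sum_product] at hE
  simp only [ENNReal.ofReal_mul (Nat.cast_nonneg N)]
  rw [lintegral_const_mul' _ _ ENNReal.ofReal_ne_top, hE]
  change ENNReal.ofReal _ * ∑ p, ∑ q, ENNReal.ofReal _ ≤ _
  simp only [← ENNReal.ofReal_sum_of_nonneg fun _ _ => hvar_nonneg _ _]
  rw [← ENNReal.ofReal_sum_of_nonneg fun _ _ => Finset.sum_nonneg fun _ _ => hvar_nonneg _ _,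
    ← ENNReal.ofReal_mul (Nat.cast_nonneg N)]
  exact ENNReal.ofReal_le_ofReal (mul_sum_sum_ultrametricVariance_le c N)

theorem ultrametric_blocks_traceNorm_summable_general
    {Ω : Type*} [MeasurableSpace Ω] (Pr : Measure Ω)
    (c : ℝ) (hc : 1 < c)
    (M : (r : ℕ) → ℕ → Ω → Matrix (Fin (2 ^ r)) (Fin (2 ^ r)) ℝ)
    (hmeas : ∀ (r k : ℕ) (x y : Fin (2 ^ r)), Measurable fun ω => M r k ω x y)
    (hlaw : ∀ (r k : ℕ) (x y : Fin (2 ^ r)), Pr.map (fun ω => M r k ω x y) =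
      gaussianReal 0 (Real.toNNReal
        (((2 : ℝ) ^ r) ^ (-(1 + c)) * (1 + if x = y then 1 else 0) / 2 ^ r))) :
    ∀ x : ℕ, ∀ᵐ ω ∂Pr,
      (∃ C : ℝ, ∀ r : ℕ, traceNorm (M r (x / 2 ^ r) ω) ≤ C * (2 : ℝ) ^ ((1 - c) * r / 4)) ∧
      Summable fun r : ℕ => traceNorm (M r (x / 2 ^ r) ω) := by
  intro x
  set ρ : ℝ := 2 ^ ((1 - c) / 4)
  have hρ0 : 0 < ρ := by positivity
  have hρ1 : ρ < 1 := Real.rpow_lt_one_of_one_lt_of_neg one_lt_two (by linarith)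
  have hρ_pow : ∀ r : ℕ, (2 : ℝ) ^ ((1 - c) * r / 4) = ρ ^ r := fun r => by
    rw [← Real.rpow_mul_natCast zero_le_two]
    ring_nf
  have hρ_pow_four : ∀ r : ℕ, ((2 : ℝ) ^ r) ^ (1 - c) = (ρ ^ r) ^ 4 := fun r => by
    rw [← hρ_pow, ← Real.rpow_natCast _ 4, ← Real.rpow_mul zero_le_two,
      ← Real.rpow_natCast 2 r, ← Real.rpow_mul zero_le_two]
    ring_nf
  set f : ℕ → Ω → ℝ := fun r ω => 2 ^ r * ∑ p, ∑ q, M r (x / 2 ^ r) ω p q ^ 2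
  have hf : ∀ r, AEMeasurable (f r) Pr := fun r =>
    (Finset.measurable_sum _ fun p _ => Finset.measurable_sum _ fun q _ =>
      (hmeas r _ p q).pow_const 2).const_mul _ |>.aemeasurable
  have hf_moment : ∀ r, ∫⁻ ω, ENNReal.ofReal (f r ω) ∂Pr ≤ ENNReal.ofReal (2 * (ρ ^ r) ^ 4) := by
    intro r
    have := lintegral_ofReal_mul_sum_sq_le_of_ultrametricVariance (A := M r (x / 2 ^ r))
      (fun p q => (hmeas r _ p q).aemeasurable) (fun p q => by push_cast; exact hlaw r _ p q)
    push_cast at this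
    rwa [hρ_pow_four] at this
  have hsummable : Summable fun r : ℕ => 2 * (ρ ^ r) ^ 4 / (ρ ^ r) ^ 2 := by
    have hρ_sq : ρ ^ 2 < 1 := pow_lt_one₀ hρ0.le hρ1 two_ne_zero
    refine ((summable_geometric_of_lt_one (by positivity) hρ_sq).mul_left 2).congr fun r => ?_
    field_simp
    ring
  filter_upwards [ae_exists_forall_le_mul_of_lintegral_le hf (fun r => by positivity) hf_moment
    hsummable] with ω ⟨C, hC⟩
  have hbound : ∀ r, traceNorm (M r (x / 2 ^ r) ω) ≤ √C * ρ ^ r := fun r =>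
    calc traceNorm (M r (x / 2 ^ r) ω) ≤ √(f r ω) :=
          Real.le_sqrt_of_sq_le (by simpa [f] using traceNorm_sq_le (M r (x / 2 ^ r) ω))
      _ ≤ √(C * (ρ ^ r) ^ 2) := Real.sqrt_le_sqrt (hC r)
      _ = √C * ρ ^ r := by rw [Real.sqrt_mul' _ (by positivity), Real.sqrt_sq (by positivity)]
  refine ⟨⟨√C, fun r => hρ_pow r ▸ hbound r⟩, ?_⟩
  exact .of_nonneg_of_le (fun r => traceNorm_nonneg _) hbound
    ((summable_geometric_of_lt_one hρ0.le hρ1).mul_left _)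

/-- `M r k` is the random GOE-type block of the infinite-volume ultrametric ensemble on
the `k`-th block `{k·2^r, …, (k+1)·2^r − 1}` of level `r` of the binary hierarchy: all
blocks independent, entries `(x,y)` with `x ≤ y` independent centered Gaussians of
variance `|B|^{−(1+c)}(1+δ_{xy})/|B|`, `|B| = 2^r`.  If `c > 1`, then for every `x`,
almost surely there is `C < ∞` with `‖H(B_r(x))‖₁ ≤ C·2^{(1−c)r/4}` for all `r`; in
particular `∑_r ‖H(B_r(x))‖₁ < ∞` almost surely.  (The block of level `r` containing `x`
has index `x / 2^r`.) -/
theorem ultrametric_blocks_traceNorm_summable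
    {Ω : Type*} [MeasurableSpace Ω] (Pr : Measure Ω) [IsProbabilityMeasure Pr]
    (c : ℝ) (hc : 1 < c)
    (M : (r : ℕ) → ℕ → Ω → Matrix (Fin (2 ^ r)) (Fin (2 ^ r)) ℝ)
    (hmeas : ∀ (r k : ℕ) (x y : Fin (2 ^ r)), Measurable fun ω => M r k ω x y)
    (hsymm : ∀ (r k : ℕ) (ω : Ω), (M r k ω).IsSymm)
    (hlaw : ∀ (r k : ℕ) (x y : Fin (2 ^ r)), Pr.map (fun ω => M r k ω x y) =
      gaussianReal 0 (Real.toNNReal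
        (((2 : ℝ) ^ r) ^ (-(1 + c)) * (1 + if x = y then 1 else 0) / 2 ^ r)))
    (hindep : iIndepFun
      (fun (i : Σ r : ℕ, ℕ × {q : Fin (2 ^ r) × Fin (2 ^ r) // q.1 ≤ q.2}) ω =>
        M i.1 i.2.1 ω i.2.2.1.1 i.2.2.1.2) Pr) :
    ∀ x : ℕ, ∀ᵐ ω ∂Pr,
      (∃ C : ℝ, ∀ r : ℕ, traceNorm (M r (x / 2 ^ r) ω) ≤ C * (2 : ℝ) ^ ((1 - c) * r / 4)) ∧
      Summable fun r : ℕ => traceNorm (M r (x / 2 ^ r) ω) :=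
  ultrametric_blocks_traceNorm_summable_general Pr c hc M hmeas hlaw
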